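/- arXiv:2102.06134 — 2 statements merged into one kernel-verified Lean document; each statement's English description precedes it below -/
import Mathlib

section
/- Let L be the little oriented matroid of a sweep oriented matroid M on E_n. If I ⊆ [n] is a flat of L of rank at least 2, and J is the minimal flat of M containing {(i,j) ∈ E_n : i, j ∈ I}, then the rank of J in M equals the rank of I in L minus 1. -/
/-- The set `E_n = {(i,j) : 1 ≤ i < j ≤ n}`. -/
abbrev Pairs (n : ℕ) := {p : Fin n × Fin n // p.1 < p.2}

/-- Composition of sign vectors: `(X ∘ Y)_e = X_e` if `X_e ≠ 0`, else `Y_e`. -/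
def signComp {E : Type*} (X Y : E → SignType) : E → SignType :=
  fun e => if X e = 0 then Y e else X e

/-- The covector axioms for oriented matroids: (V0) the zero vector belongs, (V1)
closure under negation, (V2) closure under composition, (V3) covector elimination. -/
def IsOrientedMatroid {E : Type*} (C : Set (E → SignType)) : Prop :=
  (fun _ => 0) ∈ C ∧
  (∀ X ∈ C, -X ∈ C) ∧
  (∀ X ∈ C, ∀ Y ∈ C, signComp X Y ∈ C) ∧
  (∀ X ∈ C, ∀ Y ∈ C, ∀ e, X e ≠ 0 → X e = -Y e →
    ∃ Z ∈ C, Z e = 0 ∧ ∀ f, ¬(X f ≠ 0 ∧ X f = -Y f) → Z f = signComp X Y f)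

/-- The conformal (componentwise) partial order on sign vectors: `0 ≺ +`, `0 ≺ -`. -/
def covLE {E : Type*} (X Y : E → SignType) : Prop := ∀ e, X e = 0 ∨ X e = Y e

/-- A covector of the braid oriented matroid on `E_n`: the sign vector obtained from
an ordered partition of `[n]` (given by a surjection `p`) via
`X_{(i,j)} = sign (p j - p i)`. -/
def IsBraidCovector {n : ℕ} (X : Pairs n → SignType) : Prop :=
  ∃ (l : ℕ) (p : Fin n → Fin l), Function.Surjective p ∧
    ∀ e : Pairs n, X e =
      if p e.1.1 < p e.1.2 then 1 else if p e.1.2 < p e.1.1 then -1 else 0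

/-- The covectors `X^k` of the big oriented matroid of a sweep oriented matroid, on
the ground set `[n] ∪ E_n`: for each covector `X`, with associated surjection
`p : [n] → [l]` (values of `p` are shifted by one to match the paper's `p_X : [n] → [l]`),
and each `1 ≤ k ≤ 2l+1`, the sign vector which is `-` on `i` with `p_X(i) ≤ ⌊(k-1)/2⌋`,
`+` on `i` with `p_X(i) > ⌊k/2⌋`, `0` on the remaining `i` (only for `k` even, where
`p_X(i) = k/2`), and agrees with `X` on `E_n`. -/
def BigCovectors {n : ℕ} (C : Set (Pairs n → SignType)) :
    Set ((Fin n ⊕ Pairs n) → SignType) :=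
  { Z | ∃ X ∈ C, ∃ (l : ℕ) (p : Fin n → Fin l), Function.Surjective p ∧
      (∀ e : Pairs n, X e =
        if p e.1.1 < p e.1.2 then 1 else if p e.1.2 < p e.1.1 then -1 else 0) ∧
      ∃ k : ℕ, 1 ≤ k ∧ k ≤ 2 * l + 1 ∧
        (∀ i : Fin n, Z (Sum.inl i) =
          if (p i : ℕ) + 1 ≤ (k - 1) / 2 then -1
          else if k / 2 < (p i : ℕ) + 1 then 1 else 0) ∧
        (∀ e : Pairs n, Z (Sum.inr e) = X e) }

/-- The little oriented matroid of a sweep oriented matroid: the restriction of its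
big oriented matroid to the ground set `[n]`. -/
def LittleCovectors {n : ℕ} (C : Set (Pairs n → SignType)) : Set (Fin n → SignType) :=
  { Y | ∃ Z ∈ BigCovectors C, ∀ i, Y i = Z (Sum.inl i) }

/-- There is a chain of `r+1` distinct covectors in the conformal order. -/
def HasChain {E : Type*} (C : Set (E → SignType)) (r : ℕ) : Prop :=
  ∃ c : Fin (r + 1) → (E → SignType), (∀ i, c i ∈ C) ∧
    ∀ i j : Fin (r + 1), i < j → covLE (c i) (c j) ∧ c i ≠ c j

/-- The set of covectors has rank `r`: maximal chains in the poset of covectors have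
length `r`. -/
def HasRank {E : Type*} (C : Set (E → SignType)) (r : ℕ) : Prop :=
  HasChain C r ∧ ¬ HasChain C (r + 1)

/-- Restriction of a set of covectors to a subset `F` of the ground set. -/
def restrictSet {E : Type*} (C : Set (E → SignType)) (F : Set E) : Set (F → SignType) :=
  { Y | ∃ X ∈ C, ∀ e : F, Y e = X e.1 }

/-- A flat of an oriented matroid: the zero set of a covector. -/
def IsFlat {E : Type*} (C : Set (E → SignType)) (F : Set E) : Prop :=
  ∃ X ∈ C, F = {e | X e = 0}


/-!
Ranks are measured by chains of covectors, and a chain `c₀ < ⋯ < c_r` is encoded by a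
triangular family: covectors `F s` and elements `g i` with `F s (g i) = 0` for `s < i` and
`F i (g i) ≠ 0` (take `F s` a covector inducing `c_{s+1}` and `g i` an element where `c_i`
vanishes but `c_{i+1}` does not); conversely the prefix compositions `F 0 ∘ ⋯ ∘ F (t-1)` of a
triangular family form a chain.

A little covector is, on its zero set, determined by a braid covector `X`: two zeros lie in one
class of the ordered partition of `X`, and a zero `y` and a nonzero `x` lie in different classes.
So a triangular family of length `r + 1` in `L|I` gives one of length `r` in `M` on the pairs
`{y, xᵢ} ⊆ J`, where `y` is the element dropped last.

Conversely, a triangular family of length `r` in `M|J` is independent in the underlying matroid,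
and `J` lies in the closure of the star of pairs `{x, z}`, `z ∈ I`. By Steinitz exchange it can be
moved onto that star, where the signs seen from `x` of its prefix compositions, followed by one
more little covector making the class of `x` positive, form a chain of length `r + 1` in `L|I`.
-/

open Finset

section SignVectors

variable {E : Type*}

lemma SignType.eq_or_eq_neg_of_ne_zero {x y : SignType} (hx : x ≠ 0) (hy : y ≠ 0) :
    x = y ∨ x = -y := by
  cases x <;> cases y <;> simp_all

lemma covLE.eq_zero_of_eq_zero {X Y : E → SignType} (h : covLE X Y) {e : E} (he : Y e = 0) :
    X e = 0 :=
  (h e).elim id (· ▸ he)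

lemma exists_eq_zero_ne_zero_of_covLE {X Y : E → SignType} (h : covLE X Y) (hne : X ≠ Y) :
    ∃ e, X e = 0 ∧ Y e ≠ 0 := by
  by_contra! hXY
  exact hne (funext fun e => (h e).elim (fun h0 => h0.trans (hXY e h0).symm) id)

/-- `signCompPrefix F t = F 0 ∘ F 1 ∘ ⋯ ∘ F (t - 1)`, the empty composition being `0`. -/
def signCompPrefix (F : ℕ → E → SignType) : ℕ → E → SignType
  | 0 => fun _ => 0
  | t + 1 => signComp (signCompPrefix F t) (F t)

variable {F : ℕ → E → SignType}

lemma signCompPrefix_mem {C : Set (E → SignType)} (hC : IsOrientedMatroid C) {t : ℕ}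
    (hF : ∀ s < t, F s ∈ C) : signCompPrefix F t ∈ C := by
  induction t with
  | zero => exact hC.1
  | succ t ih => exact hC.2.2.1 _ (ih fun s hs => hF s (by omega)) _ (hF t (by omega))

lemma signCompPrefix_apply_eq_zero {t : ℕ} {e : E} (h : ∀ s < t, F s e = 0) :
    signCompPrefix F t e = 0 := by
  induction t with
  | zero => rfl
  | succ t ih =>
    rw [signCompPrefix, signComp, if_pos (ih fun s hs => h s (by omega))]
    exact h t (by omega)

lemma signCompPrefix_apply_of_ne_zero {s t : ℕ} {e : E} (hst : s ≤ t)
    (h : signCompPrefix F s e ≠ 0) : signCompPrefix F t e = signCompPrefix F s e := by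
  induction t, hst using Nat.le_induction with
  | base => rfl
  | succ t _ ih => rw [signCompPrefix, signComp, if_neg (by rwa [ih]), ih]

lemma covLE_signCompPrefix (F : ℕ → E → SignType) {s t : ℕ} (hst : s ≤ t) :
    covLE (signCompPrefix F s) (signCompPrefix F t) := fun _ =>
  (em _).imp id fun h => (signCompPrefix_apply_of_ne_zero hst h).symm

lemma signCompPrefix_apply_of_lt {i t : ℕ} {e : E} (hzero : ∀ s < i, F s e = 0)
    (hne : F i e ≠ 0) (hit : i < t) : signCompPrefix F t e = F i e := by
  have h : signCompPrefix F (i + 1) e = F i e := by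
    rw [signCompPrefix, signComp, if_pos (signCompPrefix_apply_eq_zero hzero)]
  rw [signCompPrefix_apply_of_ne_zero hit (h ▸ hne), h]

def IsTriangular {m : ℕ} (F : ℕ → E → SignType) (g : Fin m → E) : Prop :=
  ∀ i : Fin m, (∀ s < (i : ℕ), F s (g i) = 0) ∧ F i (g i) ≠ 0

lemma IsTriangular.cons {m : ℕ} {g : Fin m → E} (h : IsTriangular F g) {V : E → SignType}
    {y : E} (hV : ∀ i, V (g i) = 0) (hy : V y ≠ 0) :
    IsTriangular (fun | 0 => V | s + 1 => F s) (Fin.cons y g : Fin (m + 1) → E) := by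
  intro i
  induction i using Fin.cases with
  | zero => exact ⟨fun s hs => absurd hs (Nat.not_lt_zero s), hy⟩
  | succ i =>
    refine ⟨fun s hs => ?_, by simpa using (h i).2⟩
    match s with
    | 0 => simpa using hV i
    | s + 1 => simpa using (h i).1 s (by simp at hs; omega)

lemma IsTriangular.hasChain_restrictSet {D : Set (E → SignType)} {G : Set E} {m : ℕ}
    {g : Fin m → E} (htri : IsTriangular F g) (hD : ∀ t ≤ m, signCompPrefix F t ∈ D)
    (hG : ∀ i, g i ∈ G) : HasChain (restrictSet D G) m := by
  refine ⟨fun t e => signCompPrefix F t e, fun t => ⟨_, hD t (by omega), fun _ => rfl⟩,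
    fun i j hij => ⟨fun e => covLE_signCompPrefix F hij.le e, fun heq => ?_⟩⟩
  have hi : (i : ℕ) < m := by omega
  obtain ⟨hzero, hne⟩ := htri ⟨i, hi⟩
  have := congrFun heq ⟨g ⟨i, hi⟩, hG _⟩
  dsimp only at this
  rw [signCompPrefix_apply_eq_zero hzero, signCompPrefix_apply_of_lt hzero hne hij] at this
  exact hne this.symm

lemma HasChain.exists_isTriangular {D : Set (E → SignType)} {G : Set E} {m : ℕ}
    (h : HasChain (restrictSet D G) m) :
    ∃ (F : ℕ → E → SignType) (g : Fin m → E), (∀ s, F s ∈ D) ∧ (∀ i, g i ∈ G) ∧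
      IsTriangular F g := by
  obtain ⟨c, hcD, hc⟩ := h
  choose Y hYD hcY using hcD
  have hmono : ∀ i j, i ≤ j → covLE (c i) (c j) := fun i j hij =>
    hij.eq_or_lt.elim (fun h => h ▸ fun _ => Or.inr rfl) fun h => (hc i j h).1
  choose g hg0 hg1 using fun i : Fin m =>
    exists_eq_zero_ne_zero_of_covLE (hc _ _ i.castSucc_lt_succ).1 (hc _ _ i.castSucc_lt_succ).2
  refine ⟨fun s => Y ⟨min (s + 1) m, by omega⟩, fun i => g i, fun s => hYD _,
    fun i => (g i).2, fun i => ⟨fun s hs => ?_, ?_⟩⟩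
  · dsimp only
    rw [← hcY]
    exact (hmono _ i.castSucc (by simp [Fin.le_def]; omega)).eq_zero_of_eq_zero (hg0 i)
  · have : (⟨min (i + 1) m, by omega⟩ : Fin (m + 1)) = i.succ := Fin.ext (by simp)
    dsimp only
    rw [this, ← hcY]
    exact hg1 i

end SignVectors

section Closure

variable {E : Type*} {C : Set (E → SignType)}

/-- The matroid closure: the intersection of the flats of `C` containing `B`. -/
def omClosure (C : Set (E → SignType)) (B : Set E) : Set E :=
  {e | ∀ V ∈ C, (∀ b ∈ B, V b = 0) → V e = 0}

lemma omClosure_subset_omClosure {S T : Set E} (h : S ⊆ omClosure C T) :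
    omClosure C S ⊆ omClosure C T :=
  fun _ he V hV hT => he V hV fun _ hb => h hb V hV hT

lemma omClosure_anti {D : Set (E → SignType)} (hDC : D ⊆ C) (B : Set E) :
    omClosure C B ⊆ omClosure D B :=
  fun _ he V hV => he V (hDC hV)

lemma subset_omClosure_of_forall_isFlat {B J : Set E}
    (hJ : ∀ J', IsFlat C J' → B ⊆ J' → J ⊆ J') : J ⊆ omClosure C B :=
  fun _ he V hV hVB => hJ {f | V f = 0} ⟨V, hV, rfl⟩ hVB he

/-- The covectors of the contraction `C / x`, keeping `x` as a loop. -/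
lemma IsOrientedMatroid.contract (hC : IsOrientedMatroid C) (x : E) :
    IsOrientedMatroid {V ∈ C | V x = 0} := by
  obtain ⟨h0, hneg, hcomp, helim⟩ := hC
  refine ⟨⟨h0, rfl⟩, fun X hX => ⟨hneg X hX.1, by simp [hX.2]⟩,
    fun X hX Y hY => ⟨hcomp X hX.1 Y hY.1, by simp [signComp, hX.2, hY.2]⟩,
    fun X hX Y hY e he hXY => ?_⟩
  obtain ⟨Z, hZ, hZe, hZf⟩ := helim X hX.1 Y hY.1 e he hXY
  exact ⟨Z, ⟨hZ, by rw [hZf x fun h => h.1 hX.2, signComp, if_pos hX.2, hY.2]⟩, hZe, hZf⟩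

lemma IsOrientedMatroid.mem_omClosure_insert (hC : IsOrientedMatroid C) {B : Set E} {e f : E}
    (hf : f ∉ omClosure C B) (hfe : f ∈ omClosure C (insert e B)) :
    e ∈ omClosure C (insert f B) := by
  intro V hV hVB
  by_contra hVe
  -- eliminating `e` between `V` and a `W` opposite to it at `e` gives a covector vanishing at `e`
  -- and agreeing with `W` on `B ∪ {f}`, where `V` vanishes
  have key : ∀ W ∈ C, (∀ b ∈ B, W b = 0) → V e = -W e → W f = 0 := by
    intro W hW hWB hVW
    obtain ⟨Z, hZ, hZe, hZsep⟩ := hC.2.2.2 V hV W hW e hVe hVW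
    have hZW : ∀ b, V b = 0 → Z b = W b := fun b hb => by
      rw [hZsep b fun h => h.1 hb, signComp, if_pos hb]
    rw [← hZW f (hVB f (Set.mem_insert _ _))]
    refine hfe Z hZ fun b hb => ?_
    rcases hb with rfl | hb
    · exact hZe
    · rw [hZW b (hVB b (Set.mem_insert_of_mem _ hb)), hWB b hb]
  obtain ⟨W, hW, hWB, hWf⟩ : ∃ W ∈ C, (∀ b ∈ B, W b = 0) ∧ W f ≠ 0 := by
    simpa [omClosure] using hf
  have hWe : W e ≠ 0 := fun h => hWf (hfe W hW (by rintro b (rfl | hb); exacts [h, hWB b hb]))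
  rcases SignType.eq_or_eq_neg_of_ne_zero hVe hWe with h | h
  · refine hWf (SignType.neg_eq_zero_iff.mp (key (-W) (hC.2.1 W hW) (fun b hb => ?_) (by simp [h])))
    simp [hWB b hb]
  · exact hWf (key W hW hWB h)

lemma IsOrientedMatroid.exists_subset_omClosure_contract_erase [DecidableEq E]
    (hC : IsOrientedMatroid C) {P : Finset E} {x : E} (hx : x ∈ omClosure C P)
    (hloop : ∃ V ∈ C, V x ≠ 0) :
    ∃ p ∈ P, (P : Set E) ⊆ omClosure {V ∈ C | V x = 0} (P.erase p) := by
  obtain ⟨Q, hQP, hxQ, hQmin⟩ :=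
    exists_minimal_le_of_wellFoundedLT (fun Q : Finset E => x ∈ omClosure C Q) P hx
  obtain ⟨p, hp⟩ : Q.Nonempty := by
    rw [Finset.nonempty_iff_ne_empty]
    rintro rfl
    obtain ⟨V, hV, hVx⟩ := hloop
    exact hVx (hxQ V hV (by simp))
  have hxp : x ∉ omClosure C (Q.erase p : Set E) := fun h =>
    (notMem_erase p Q) (hQmin h (erase_subset p Q) hp)
  have hpx : p ∈ omClosure C (insert x (Q.erase p : Set E)) :=
    hC.mem_omClosure_insert hxp (by rwa [← coe_insert, insert_erase hp])
  refine ⟨p, hQP hp, fun q hq V ⟨hV, hVx⟩ hVP => ?_⟩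
  by_cases hqp : q = p
  · subst hqp
    exact hpx V hV (by rintro b (rfl | hb); exacts [hVx, hVP b (erase_subset_erase _ hQP hb)])
  · exact hVP q (mem_erase.mpr ⟨hqp, hq⟩)

/-- Steinitz exchange: contracting the last element `g m` lowers the rank of `P` and leaves the
rest of the family triangular. -/
theorem IsTriangular.card_le [DecidableEq E] (hC : IsOrientedMatroid C) {m : ℕ}
    {F : ℕ → E → SignType} {g : Fin m → E} (htri : IsTriangular F g) (hF : ∀ s < m, F s ∈ C)
    {P : Finset E} (hg : ∀ i, g i ∈ omClosure C P) : m ≤ P.card := by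
  induction m generalizing C P with
  | zero => exact Nat.zero_le _
  | succ m ih =>
    obtain ⟨p, hp, hP⟩ := hC.exists_subset_omClosure_contract_erase (hg (Fin.last m))
      ⟨F m, hF m (by omega), (htri (Fin.last m)).2⟩
    have := ih (hC.contract (g (Fin.last m))) (g := fun i => g i.castSucc)
      (fun i => htri i.castSucc) (fun s hs => ⟨hF s (by omega), (htri (Fin.last m)).1 s hs⟩)
      fun i => omClosure_subset_omClosure hP (omClosure_anti (fun _ hV => hV.1) _ (hg _))
    rw [card_erase_of_mem hp] at this
    have := card_pos.mpr ⟨p, hp⟩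
    omega

/-- By `IsTriangular.card_le`, `S` never lies in the closure of a shorter triangular family, so
one can be grown greedily inside `S` by prepending. -/
theorem IsTriangular.exists_isTriangular_of_forall_mem_omClosure (hC : IsOrientedMatroid C)
    {m : ℕ} {F : ℕ → E → SignType} {g : Fin m → E} (htri : IsTriangular F g)
    (hF : ∀ s < m, F s ∈ C) {S : Set E} (hg : ∀ i, g i ∈ omClosure C S) :
    ∃ (W : ℕ → E → SignType) (e : Fin m → E), (∀ s < m, W s ∈ C) ∧ (∀ i, e i ∈ S) ∧
      IsTriangular W e := by
  classical
  suffices ∀ k ≤ m, ∃ (W : ℕ → E → SignType) (e : Fin k → E), (∀ s < k, W s ∈ C) ∧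
      (∀ i, e i ∈ S) ∧ IsTriangular W e from this m le_rfl
  intro k hk
  induction k with
  | zero =>
    exact ⟨F, Fin.elim0, fun s hs => absurd hs (Nat.not_lt_zero s), nofun, nofun⟩
  | succ k ih =>
    obtain ⟨W, e, hW, heS, htri'⟩ := ih (by omega)
    have hS : ¬ S ⊆ omClosure C (univ.image e : Set E) := fun hS => by
      have := htri.card_le hC hF fun i => omClosure_subset_omClosure hS (hg i)
      have := (card_image_le (s := univ) (f := e)).trans_eq (card_fin k)
      omega
    obtain ⟨y, hyS, hy⟩ := Set.not_subset.mp hS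
    obtain ⟨V, hV, hVe, hVy⟩ : ∃ V ∈ C, (∀ b ∈ univ.image e, V b = 0) ∧ V y ≠ 0 := by
      simpa [omClosure] using hy
    refine ⟨fun | 0 => V | s + 1 => W s, Fin.cons y e, fun s hs => ?_, fun i => ?_,
      htri'.cons (fun i => hVe _ (by simp)) hVy⟩
    · cases s
      exacts [hV, hW _ (by omega)]
    · induction i using Fin.cases
      exacts [hyS, by simpa using heS _]

end Closure

section Sweep

variable {n : ℕ} {C : Set (Pairs n → SignType)}

def pairSign (V : Pairs n → SignType) (x y : Fin n) : SignType :=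
  if h : x < y then V ⟨(x, y), h⟩ else if h : y < x then -V ⟨(y, x), h⟩ else 0

def IsPairOf (e : Pairs n) (x y : Fin n) : Prop :=
  e.1.1 = x ∧ e.1.2 = y ∨ e.1.1 = y ∧ e.1.2 = x

def starPairs (x : Fin n) (I : Set (Fin n)) : Set (Pairs n) :=
  {e | ∃ z ∈ I, IsPairOf e x z}

lemma pairSign_self (V : Pairs n → SignType) (x : Fin n) : pairSign V x x = 0 := by
  simp [pairSign]

lemma pairSign_signComp (V W : Pairs n → SignType) (x : Fin n) :
    pairSign (signComp V W) x = signComp (pairSign V x) (pairSign W x) := by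
  funext y
  rcases lt_trichotomy x y with h | rfl | h
  · simp [pairSign, signComp, h]
  · simp [pairSign, signComp]
  · simp only [pairSign, signComp, dif_neg h.not_gt, dif_pos h, SignType.neg_eq_zero_iff]
    split_ifs <;> rfl

lemma exists_isPairOf {x y : Fin n} (h : x ≠ y) : ∃ e, IsPairOf e x y := by
  rcases h.lt_or_gt with h | h
  exacts [⟨⟨(x, y), h⟩, Or.inl ⟨rfl, rfl⟩⟩, ⟨⟨(y, x), h⟩, Or.inr ⟨rfl, rfl⟩⟩]

lemma IsPairOf.apply_eq_zero_iff {e : Pairs n} {x y : Fin n} (he : IsPairOf e x y)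
    (V : Pairs n → SignType) : V e = 0 ↔ pairSign V x y = 0 := by
  obtain ⟨⟨a, b⟩, hab⟩ := e
  rcases he with ⟨rfl, rfl⟩ | ⟨rfl, rfl⟩
  · simp [pairSign, hab]
  · simp [pairSign, hab, hab.not_gt]

lemma IsPairOf.mem {e : Pairs n} {x y : Fin n} (he : IsPairOf e x y) {I : Set (Fin n)}
    (hx : x ∈ I) (hy : y ∈ I) : e.1.1 ∈ I ∧ e.1.2 ∈ I := by
  rcases he with ⟨h1, h2⟩ | ⟨h1, h2⟩ <;> simp [h1, h2, hx, hy]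

section Braid

variable {V : Pairs n → SignType} {l : ℕ} {p : Fin n → Fin l}
  (hV : ∀ e : Pairs n, V e =
    if p e.1.1 < p e.1.2 then 1 else if p e.1.2 < p e.1.1 then -1 else 0)
include hV

lemma pairSign_eq_of_braid (x y : Fin n) :
    pairSign V x y = if p x < p y then 1 else if p y < p x then -1 else 0 := by
  rcases lt_trichotomy x y with h | rfl | h
  · simp [pairSign, h, hV]
  · simp [pairSign]
  · simp only [pairSign, dif_neg h.not_gt, dif_pos h, hV]
    rcases lt_trichotomy (p x) (p y) with h' | h' | h' <;> simp [h', h'.not_gt]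

lemma pairSign_eq_zero_iff_of_braid (x y : Fin n) : pairSign V x y = 0 ↔ p x = p y := by
  rw [pairSign_eq_of_braid hV]
  rcases lt_trichotomy (p x) (p y) with h | h | h
  · simp [h, h.ne]
  · simp [h]
  · simp [h, h.not_gt, h.ne']

/-- The restriction to `[n]` of the big covector `V^k` (see `BigCovectors`). -/
lemma mem_littleCovectors (hVC : V ∈ C) (hp : Function.Surjective p) {k : ℕ} (hk1 : 1 ≤ k)
    (hk2 : k ≤ 2 * l + 1) :
    (fun i => if (p i : ℕ) + 1 ≤ (k - 1) / 2 then -1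
      else if k / 2 < (p i : ℕ) + 1 then 1 else 0) ∈ LittleCovectors C :=
  ⟨Sum.elim _ V, ⟨V, hVC, l, p, hp, hV, k, hk1, hk2, fun _ => rfl, fun _ => rfl⟩, fun _ => rfl⟩

end Braid

lemma pairSign_mem_littleCovectors (hsweep : ∀ X ∈ C, IsBraidCovector X)
    {V : Pairs n → SignType} (hV : V ∈ C) (x : Fin n) : pairSign V x ∈ LittleCovectors C := by
  obtain ⟨l, p, hp, hVp⟩ := hsweep V hV
  convert mem_littleCovectors hVp hV hp (k := 2 * ((p x : ℕ) + 1)) (by omega)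
    (by have := (p x).2; omega) using 1
  funext y
  simp only [pairSign_eq_of_braid hVp, Fin.lt_def]
  split_ifs <;> first | rfl | omega

lemma signComp_pairSign_mem_littleCovectors (hsweep : ∀ X ∈ C, IsBraidCovector X)
    {V : Pairs n → SignType} (hV : V ∈ C) (x : Fin n) :
    signComp (pairSign V x) (fun _ => 1) ∈ LittleCovectors C := by
  obtain ⟨l, p, hp, hVp⟩ := hsweep V hV
  convert mem_littleCovectors hVp hV hp (k := 2 * (p x : ℕ) + 1) (by omega)
    (by have := (p x).2; omega) using 1
  funext y
  simp only [signComp, pairSign_eq_of_braid hVp, Fin.lt_def]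
  split_ifs <;> first | rfl | omega | simp_all

lemma exists_pairSign_eq_zero_iff_of_mem_littleCovectors {Y : Fin n → SignType}
    (hY : Y ∈ LittleCovectors C) :
    ∃ X ∈ C, ∀ x y, Y x = 0 → (Y y = 0 ↔ pairSign X x y = 0) := by
  obtain ⟨Z, ⟨X, hX, l, p, -, hXp, k, -, -, hZ, -⟩, hYZ⟩ := hY
  refine ⟨X, hX, fun x y hx => ?_⟩
  rw [pairSign_eq_zero_iff_of_braid hXp, Fin.ext_iff]
  rw [hYZ, hZ] at hx ⊢
  split_ifs at hx ⊢ <;> simp_all <;> omega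

/-- A braid covector vanishing on the star at `x` is constant on `I`. -/
lemma setOf_subset_omClosure_starPairs (hsweep : ∀ X ∈ C, IsBraidCovector X)
    (I : Set (Fin n)) (x : Fin n) :
    {e : Pairs n | e.1.1 ∈ I ∧ e.1.2 ∈ I} ⊆ omClosure C (starPairs x I) := by
  rintro e ⟨he1, he2⟩ V hV hVx
  obtain ⟨l, p, -, hVp⟩ := hsweep V hV
  have hp : ∀ z ∈ I, p x = p z := fun z hz => by
    rcases eq_or_ne x z with rfl | hxz
    · rfl
    obtain ⟨f, hf⟩ := exists_isPairOf hxz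
    rw [← pairSign_eq_zero_iff_of_braid hVp, ← hf.apply_eq_zero_iff]
    exact hVx f ⟨z, hz, hf⟩
  have he : IsPairOf e e.1.1 e.1.2 := Or.inl ⟨rfl, rfl⟩
  rw [he.apply_eq_zero_iff, pairSign_eq_zero_iff_of_braid hVp, ← hp _ he1, hp _ he2]

theorem hasChain_restrictSet_of_hasChain_littleCovectors (hC : IsOrientedMatroid C)
    {I : Set (Fin n)} {J : Set (Pairs n)} (hIJ : {e : Pairs n | e.1.1 ∈ I ∧ e.1.2 ∈ I} ⊆ J)
    {m : ℕ} (h : HasChain (restrictSet (LittleCovectors C) I) (m + 1)) :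
    HasChain (restrictSet C J) m := by
  obtain ⟨F, g, hF, hgI, htri⟩ := h.exists_isTriangular
  choose X hXC hX using fun s => exists_pairSign_eq_zero_iff_of_mem_littleCovectors (hF s)
  have hy : ∀ s < m, F s (g (Fin.last m)) = 0 := (htri (Fin.last m)).1
  have hsep : ∀ i : Fin m, pairSign (X i) (g (Fin.last m)) (g i.castSucc) ≠ 0 := fun i h =>
    (htri i.castSucc).2 ((hX _ _ _ (hy i i.2)).mpr h)
  choose e he using fun i : Fin m =>
    exists_isPairOf (x := g (Fin.last m)) (y := g i.castSucc) fun h =>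
      hsep i (by rw [h]; exact pairSign_self _ _)
  refine IsTriangular.hasChain_restrictSet (F := X) (fun i => ⟨fun s hs => ?_, ?_⟩)
    (fun _ _ => signCompPrefix_mem hC fun s _ => hXC s)
    fun i => hIJ ((he i).mem (hgI _) (hgI _))
  · rw [(he i).apply_eq_zero_iff, ← hX _ _ _ (hy s (by omega))]
    exact (htri i.castSucc).1 s hs
  · rw [Ne, (he i).apply_eq_zero_iff]
    exact hsep i

theorem IsTriangular.hasChain_littleCovectors (hC : IsOrientedMatroid C)
    (hsweep : ∀ X ∈ C, IsBraidCovector X) {I : Set (Fin n)} {x : Fin n} (hx : x ∈ I) {m : ℕ}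
    {W : ℕ → Pairs n → SignType} {e : Fin m → Pairs n} (htri : IsTriangular W e)
    (hW : ∀ s < m, W s ∈ C) (he : ∀ i, e i ∈ starPairs x I) :
    HasChain (restrictSet (LittleCovectors C) I) (m + 1) := by
  choose z hzI hz using he
  let F : ℕ → Fin n → SignType := fun s => if s < m then pairSign (W s) x else fun _ => 1
  have hFW : ∀ t ≤ m, signCompPrefix F t = pairSign (signCompPrefix W t) x := by
    intro t ht
    induction t with
    | zero => funext y; simp [signCompPrefix, pairSign]
    | succ t ih =>
      simp only [signCompPrefix, pairSign_signComp, ih (by omega), F, if_pos (by omega : t < m)]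
  refine IsTriangular.hasChain_restrictSet (F := F) (g := Fin.snoc z x) (fun i => ?_)
    (fun t ht => ?_) fun i => ?_
  · induction i using Fin.lastCases with
    | last => simp +contextual [F, pairSign_self]
    | cast i =>
      simp only [Fin.snoc_castSucc, Fin.val_castSucc]
      refine ⟨fun s hs => ?_, ?_⟩
      · simpa [F, show s < m by omega, ← (hz i).apply_eq_zero_iff] using (htri i).1 s hs
      · simpa [F, ← (hz i).apply_eq_zero_iff] using (htri i).2
  · rcases ht.lt_or_eq with ht | rfl
    · rw [hFW t (by omega)]
      exact pairSign_mem_littleCovectors hsweep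
        (signCompPrefix_mem hC fun s hs => hW s (by omega)) x
    · rw [signCompPrefix, hFW m le_rfl]
      simpa [F] using signComp_pairSign_mem_littleCovectors hsweep (signCompPrefix_mem hC hW) x
  · induction i using Fin.lastCases <;> simp [hx, hzI]

theorem hasChain_littleCovectors_of_hasChain_restrictSet (hC : IsOrientedMatroid C)
    (hsweep : ∀ X ∈ C, IsBraidCovector X) {I : Set (Fin n)} {J : Set (Pairs n)}
    (hJ : J ⊆ omClosure C {e : Pairs n | e.1.1 ∈ I ∧ e.1.2 ∈ I}) {x : Fin n} (hx : x ∈ I)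
    {m : ℕ} (h : HasChain (restrictSet C J) m) :
    HasChain (restrictSet (LittleCovectors C) I) (m + 1) := by
  obtain ⟨F, g, hF, hgJ, htri⟩ := h.exists_isTriangular
  obtain ⟨W, e, hW, he, htri'⟩ := htri.exists_isTriangular_of_forall_mem_omClosure hC
    (fun s _ => hF s) fun i =>
      omClosure_subset_omClosure (setOf_subset_omClosure_starPairs hsweep I x) (hJ (hgJ i))
  exact htri'.hasChain_littleCovectors hC hsweep hx hW he

end Sweep

theorem rank_flat_little_sweep_general {n : ℕ} (C : Set (Pairs n → SignType))
    (hOM : IsOrientedMatroid C) (hsweep : ∀ X ∈ C, IsBraidCovector X)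
    (I : Set (Fin n))
    (rI : ℕ) (hrI : HasRank (restrictSet (LittleCovectors C) I) rI) (h2 : 2 ≤ rI)
    (J : Set (Pairs n))
    (hJcont : {e : Pairs n | e.1.1 ∈ I ∧ e.1.2 ∈ I} ⊆ J)
    (hJmin : ∀ J' : Set (Pairs n), IsFlat C J' →
      {e : Pairs n | e.1.1 ∈ I ∧ e.1.2 ∈ I} ⊆ J' → J ⊆ J') :
    HasRank (restrictSet C J) (rI - 1) := by
  obtain ⟨hchain, hmax⟩ := hrI
  obtain ⟨m, rfl⟩ : ∃ m, rI = m + 1 := ⟨rI - 1, by omega⟩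
  obtain ⟨x, hx⟩ : I.Nonempty := by
    obtain ⟨-, g, -, hgI, -⟩ := hchain.exists_isTriangular
    exact ⟨g 0, hgI 0⟩
  exact ⟨hasChain_restrictSet_of_hasChain_littleCovectors hOM hJcont hchain, fun hJ =>
    hmax (hasChain_littleCovectors_of_hasChain_restrictSet hOM hsweep
      (subset_omClosure_of_forall_isFlat hJmin) hx hJ)⟩

/-- Let `L` be the little oriented matroid of a sweep oriented matroid `M` on `E_n`.
If `I ⊆ [n]` is a flat of `L` of rank `rI ≥ 2` (rank of a subset being the rank of
the restriction), and `J` is the minimal flat of `M` containing all pairs with both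
endpoints in `I`, then the rank of `J` in `M` equals `rI - 1`. -/
theorem rank_flat_little_sweep {n : ℕ} (C : Set (Pairs n → SignType))
    (hOM : IsOrientedMatroid C) (hsweep : ∀ X ∈ C, IsBraidCovector X)
    (I : Set (Fin n)) (hIflat : IsFlat (LittleCovectors C) I)
    (rI : ℕ) (hrI : HasRank (restrictSet (LittleCovectors C) I) rI) (h2 : 2 ≤ rI)
    (J : Set (Pairs n)) (hJflat : IsFlat C J)
    (hJcont : {e : Pairs n | e.1.1 ∈ I ∧ e.1.2 ∈ I} ⊆ J)
    (hJmin : ∀ J' : Set (Pairs n), IsFlat C J' →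
      {e : Pairs n | e.1.1 ∈ I ∧ e.1.2 ∈ I} ⊆ J' → J ⊆ J') :
    HasRank (restrictSet C J) (rI - 1) :=
  rank_flat_little_sweep_general C hOM hsweep I rI hrI h2 J hJcont hJmin
end

section
/- Define the composition I ∘ J of two ordered partitions I = (I_1,...,I_l) and J = (J_1,...,J_{l'}) of [n] as the ordered partition obtained by refining each part I_k into the nonempty intersections I_k ∩ J_1, ..., I_k ∩ J_{l'} in this order. Then under the bijection I ↦ X^I between ordered partitions of [n] and braid covectors in {+,-,0}^{E_n} (X^I_{(i,j)} = sign(p_I(j) - p_I(i))), composition of ordered partitions corresponds to composition of sign vectors: X^{I∘J} = X^I ∘ X^J. -/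
/-- An ordered partition of `[n]`, given by the associated surjection. -/
structure OrderedPartition (n : ℕ) where
  parts : ℕ
  toFun : Fin n → Fin parts
  surj : Function.Surjective toFun

/-- The braid covector `X^I` of an ordered partition `I`:
`X^I_{(i,j)} = +` if `p_I(i) < p_I(j)`, `-` if `p_I(i) > p_I(j)`, `0` if equal. -/
def toSign {n : ℕ} (I : OrderedPartition n) : Pairs n → SignType := fun e =>
  if I.toFun e.1.1 < I.toFun e.1.2 then 1
  else if I.toFun e.1.2 < I.toFun e.1.1 then -1 else 0

/-- `K` is the composition `I ∘ J` of ordered partitions: each part of `I` is refined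
into its nonempty intersections with the parts of `J`, in the order of `J`.
Equivalently, `K` orders `[n]` lexicographically by `(p_I, p_J)`. -/
def IsComposition {n : ℕ} (I J K : OrderedPartition n) : Prop :=
  ∀ i j : Fin n, K.toFun i ≤ K.toFun j ↔
    (I.toFun i < I.toFun j ∨ (I.toFun i = I.toFun j ∧ J.toFun i ≤ J.toFun j))

/- Both sides depend only on how the parts containing `i` and `j` compare. A composition `K` of
`I` and `J` orders `[n]` like the lexicographic key `i ↦ (p_I i, p_J i)`, and the lexicographic
comparison of two pairs is the comparison of the first coordinates unless these are equal, in
which case it is the comparison of the second ones: this is exactly `signComp`. A composition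
exists because ranking the finitely many values of the key yields an ordered partition. -/

def cmpSign {α : Type*} [LinearOrder α] (a b : α) : SignType :=
  if a < b then 1 else if b < a then -1 else 0

section cmpSign

variable {α β : Type*} [LinearOrder α] [LinearOrder β]

theorem cmpSign_eq_zero_iff {a b : α} : cmpSign a b = 0 ↔ a = b := by
  rcases lt_trichotomy a b with h | rfl | h
  · simp [cmpSign, h, h.ne]
  · simp [cmpSign]
  · simp [cmpSign, h, h.not_gt, h.ne']

theorem cmpSign_congr {a b : α} {c d : β} (h : a ≤ b ↔ c ≤ d) (h' : b ≤ a ↔ d ≤ c) :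
    cmpSign a b = cmpSign c d := by
  simp only [cmpSign, lt_iff_lt_of_le_iff_le h, lt_iff_lt_of_le_iff_le h']

theorem cmpSign_toLex (a a' : α) (b b' : β) :
    cmpSign (toLex (a, b)) (toLex (a', b')) = if a = a' then cmpSign b b' else cmpSign a a' := by
  rcases lt_trichotomy a a' with h | rfl | h
  · simp [cmpSign, Prod.Lex.toLex_lt_toLex, h, h.ne]
  · simp [cmpSign, Prod.Lex.toLex_lt_toLex]
  · simp [cmpSign, Prod.Lex.toLex_lt_toLex, h, h.not_gt, h.ne']

end cmpSign

namespace OrderedPartition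

variable {n : ℕ}

theorem toSign_apply (I : OrderedPartition n) (e : Pairs n) :
    toSign I e = cmpSign (I.toFun e.1.1) (I.toFun e.1.2) :=
  rfl

theorem exists_toFun_le_iff {β : Type*} [LinearOrder β] (f : Fin n → β) :
    ∃ K : OrderedPartition n, ∀ i j, K.toFun i ≤ K.toFun j ↔ f i ≤ f j := by
  let s := Finset.univ.image f
  have hmem (i : Fin n) : f i ∈ s := Finset.mem_image_of_mem f (Finset.mem_univ i)
  let rank := s.orderIsoOfFin rfl
  refine ⟨⟨s.card, fun i => rank.symm ⟨f i, hmem i⟩, fun k => ?_⟩, fun i j => ?_⟩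
  · obtain ⟨i, -, hi⟩ := Finset.mem_image.mp (rank k).2
    exact ⟨i, rank.symm_apply_eq.mpr (Subtype.ext hi)⟩
  · rw [rank.symm.le_iff_le, Subtype.mk_le_mk]

def lexKey (I J : OrderedPartition n) (i : Fin n) : Fin I.parts ×ₗ Fin J.parts :=
  toLex (I.toFun i, J.toFun i)

theorem isComposition_iff {I J K : OrderedPartition n} :
    IsComposition I J K ↔ ∀ i j, K.toFun i ≤ K.toFun j ↔ lexKey I J i ≤ lexKey I J j := by
  simp only [IsComposition, lexKey, Prod.Lex.toLex_le_toLex]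

theorem toSign_of_isComposition {I J K : OrderedPartition n} (hK : IsComposition I J K) :
    toSign K = signComp (toSign I) (toSign J) := by
  funext ⟨⟨i, j⟩, _⟩
  have hkey := isComposition_iff.mp hK
  rw [toSign_apply, cmpSign_congr (hkey i j) (hkey j i), lexKey, lexKey, cmpSign_toLex]
  simp only [signComp, toSign_apply, cmpSign_eq_zero_iff]

end OrderedPartition

open OrderedPartition in
/-- The composition `I ∘ J` of two ordered partitions exists, and under the bijection
`I ↦ X^I` between ordered partitions and braid covectors, composition of ordered
partitions corresponds to composition of sign vectors: `X^{I∘J} = X^I ∘ X^J`. -/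
theorem composition_partitions_eq_composition_signs {n : ℕ} (I J : OrderedPartition n) :
    (∃ K : OrderedPartition n, IsComposition I J K) ∧
    (∀ K : OrderedPartition n, IsComposition I J K →
      toSign K = signComp (toSign I) (toSign J)) := by
  obtain ⟨K, hK⟩ := exists_toFun_le_iff (lexKey I J)
  exact ⟨⟨K, isComposition_iff.mpr hK⟩, fun _ => toSign_of_isComposition⟩
end
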